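/- Properties of the simplify operator: for all p, a, b ∈ ℝ^{2n} with non-negative entries and all c ≥ 0, (1) σ∘(c·p) = c·(σ∘p); (2) σ∘(a + b) ≼ (σ∘a) + (σ∘b); and (3) σ∘(W p) ≼ W (σ∘p), where ≼ denotes the coordinatewise order and W is the lazy random walk matrix of the double cover H. -/
import Mathlib


open Finset

/-- The edge weights of the double cover of a graph: the vertex `(v, false)` plays the
role of `v₁` and `(v, true)` plays the role of `v₂`; every edge `{u, v}` of the original
graph gives rise to the edges `{u₁, v₂}` and `{u₂, v₁}` of the same weight. -/
noncomputable def dcWeight {V : Type*} (w : V → V → ℝ) : V × Bool → V × Bool → ℝ :=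
  fun x y => if x.2 ≠ y.2 then w x.1 y.1 else 0

/-- The simplify operator `σ`: `(σ∘p)(u₁) = max (0, p(u₁) - p(u₂))` and
`(σ∘p)(u₂) = max (0, p(u₂) - p(u₁))`. -/
noncomputable def simplifyOp {V : Type*} (p : V × Bool → ℝ) : V × Bool → ℝ :=
  fun x => max 0 (p x - p (x.1, !x.2))

/-- The lazy random walk operator `W = (1/2)(I + A D⁻¹)` of a weighted graph,
applied to a vector `p`. -/
noncomputable def lazyWalk {U : Type*} [Fintype U] (w : U → U → ℝ) (p : U → ℝ) :
    U → ℝ :=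
  fun x => (p x + ∑ y, w x y / (∑ z, w y z) * p y) / 2

/-- **Properties of the simplify operator** (Lemma 6.4): `σ` commutes with non-negative
scaling, is subadditive, and `σ∘(W p) ≼ W(σ∘p)` where `W` is the lazy random walk matrix
of the double cover `H` of `G`. -/
theorem simplify_operator_properties
    {V : Type*} [Fintype V] [DecidableEq V]
    (w : V → V → ℝ)
    (hsymm : ∀ u v, w u v = w v u)
    (hnonneg : ∀ u v, 0 ≤ w u v)
    (hdegpos : ∀ u, 0 < ∑ v, w u v) :
    (∀ p : V × Bool → ℝ, (∀ x, 0 ≤ p x) → ∀ c : ℝ, 0 ≤ c →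
      simplifyOp (c • p) = c • simplifyOp p) ∧
    (∀ a b : V × Bool → ℝ, (∀ x, 0 ≤ a x) → (∀ x, 0 ≤ b x) →
      ∀ x, simplifyOp (a + b) x ≤ simplifyOp a x + simplifyOp b x) ∧
    (∀ p : V × Bool → ℝ, (∀ x, 0 ≤ p x) →
      ∀ x, simplifyOp (lazyWalk (dcWeight w) p) x ≤
        lazyWalk (dcWeight w) (simplifyOp p) x) := by
  have hdeg : ∀ y : V × Bool, ∑ z, dcWeight w y z = ∑ v, w y.1 v := by
    intro y
    rw [Fintype.sum_prod_type]
    refine Finset.sum_congr rfl fun v _ => ?_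
    cases hy : y.2 <;> simp [dcWeight, hy]
  have hdegpos' : ∀ y : V × Bool, (0:ℝ) < ∑ z, dcWeight w y z := by
    intro y; rw [hdeg]; exact hdegpos _
  have hdcnn : ∀ x y : V × Bool, 0 ≤ dcWeight w x y := by
    intro x y; unfold dcWeight; split <;> [exact hnonneg _ _; exact le_rfl]
  refine ⟨?_, ?_, ?_⟩
  · intro p hp c hc
    funext x
    simp only [simplifyOp, Pi.smul_apply, smul_eq_mul]
    rw [← mul_sub, mul_max_of_nonneg _ _ hc, mul_zero]
  · intro a b ha hb x
    simp only [simplifyOp, Pi.add_apply]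
    apply max_le
    · exact add_nonneg (le_max_left _ _) (le_max_left _ _)
    · have h1 := le_max_right (0:ℝ) (a x - a (x.1, !x.2))
      have h2 := le_max_right (0:ℝ) (b x - b (x.1, !x.2))
      linarith
  · intro p hp x
    set σp := simplifyOp p with hσp
    have hσnn : ∀ y, 0 ≤ σp y := fun y => le_max_left _ _
    have hσge : ∀ y : V × Bool, p y - p (y.1, !y.2) ≤ σp y := fun y => le_max_right _ _
    set D : V × Bool → ℝ := fun y => ∑ z, dcWeight w y z with hD
    have hcoe : ∀ x y : V × Bool, 0 ≤ dcWeight w x y / D y :=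
      fun x y => div_nonneg (hdcnn x y) (hdegpos' y).le
    -- reindexing identity
    have hre : ∀ q : V × Bool → ℝ,
        ∑ y, dcWeight w (x.1, !x.2) y / D y * q y
          = ∑ y, dcWeight w x y / D y * q (y.1, !y.2) := by
      intro q
      apply Fintype.sum_equiv ⟨fun y => (y.1, !y.2), fun y => (y.1, !y.2),
        fun y => by simp, fun y => by simp⟩
      intro y
      have h1 : dcWeight w x (y.1, !y.2) = dcWeight w (x.1, !x.2) y := by
        cases hx : x.2 <;> cases hy : y.2 <;> simp [dcWeight, hx, hy]
      have h2 : D (y.1, !y.2) = D y := by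
        simp only [hD, hdeg]
      simp [h1, h2]
    show max 0 (lazyWalk (dcWeight w) p x - lazyWalk (dcWeight w) p (x.1, !x.2))
        ≤ lazyWalk (dcWeight w) σp x
    simp only [lazyWalk]
    apply max_le
    · apply div_nonneg _ (by norm_num)
      exact add_nonneg (hσnn x) (Finset.sum_nonneg fun y _ =>
        mul_nonneg (hcoe x y) (hσnn y))
    · have h1 : ∑ y, dcWeight w x y / D y * p y - ∑ y, dcWeight w x y / D y * p (y.1, !y.2)
          ≤ ∑ y, dcWeight w x y / D y * σp y := by
        rw [← Finset.sum_sub_distrib]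
        refine Finset.sum_le_sum fun y _ => ?_
        rw [← mul_sub]
        exact mul_le_mul_of_nonneg_left (hσge y) (hcoe x y)
      have h2 := hre p
      have h3 := hσge x
      simp only [hD] at h1 h2 ⊢
      linarith
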